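/- arXiv:1207.5967 — 3 statements merged into one kernel-verified Lean document; each statement's English description precedes it below -/
import Mathlib

section
/- Let Z be a random vector in ℝ^k with E‖Z‖² < ∞ whose characteristic function φ(t) = E[exp(i t · Z)] is integrable with respect to Lebesgue measure on ℝ^k. Then the covariance matrix of Z is positive definite; that is, for every nonzero a ∈ ℝ^k, Var(a · Z) > 0. -/
open MeasureTheory ProbabilityTheory
open scoped RealInnerProductSpace

noncomputable section

/-!
If `Var(a · Z) = 0`, then `a · Z` is almost surely a constant `c`, so `φ (t + a) = e^{ic} φ t`
and `‖φ‖` is invariant under translation by `a`. Since `φ` is continuous with `φ 0 = 1`,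
`‖φ‖ ≥ 1/2` on a ball around `0` and hence on infinitely many disjoint translates of it, which
is incompatible with the integrability of `φ`.
-/

open Metric Complex

section PeriodicNorm

variable {E F : Type*} [NormedAddCommGroup E] [NormedSpace ℝ E] [MeasurableSpace E] [BorelSpace E]
  (μ : Measure E) [μ.IsAddHaarMeasure] [NormedAddCommGroup F]

lemma addHaar_eq_top_of_ball_add_nsmul_subset {S : Set E} {x v : E} {ε : ℝ} (hε : 0 < ε)
    (hv : 2 * ε ≤ ‖v‖) (hS : ∀ n : ℕ, ball (x + n • v) ε ⊆ S) : μ S = ⊤ := by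
  have hdisj : Pairwise (Function.onFun Disjoint fun n : ℕ => ball (x + n • v) ε) := by
    intro m n hmn
    refine ball_disjoint_ball ?_
    have hmn' : (1 : ℝ) ≤ |(m : ℝ) - n| := by
      have : (m : ℤ) - n ≠ 0 := by omega
      exact_mod_cast Int.one_le_abs this
    calc ε + ε ≤ ‖v‖ := by linarith
      _ ≤ |(m : ℝ) - n| * ‖v‖ := le_mul_of_one_le_left (norm_nonneg v) hmn'
      _ = dist (x + m • v) (x + n • v) := by
        rw [dist_add_left, dist_eq_norm, ← Nat.cast_smul_eq_nsmul ℝ, ← Nat.cast_smul_eq_nsmul ℝ n,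
          ← sub_smul, norm_smul, Real.norm_eq_abs]
  refine top_unique ?_
  calc ⊤ = ∑' _ : ℕ, μ (ball 0 ε) :=
        (ENNReal.tsum_const_eq_top_of_ne_zero (measure_ball_pos μ 0 hε).ne').symm
    _ = μ (⋃ n : ℕ, ball (x + n • v) ε) := by
        rw [measure_iUnion hdisj fun _ => measurableSet_ball]
        simp only [Measure.addHaar_ball_center μ]
    _ ≤ μ S := measure_mono (Set.iUnion_subset hS)

lemma not_integrable_of_norm_add_eq {f : E → F} {x v : E} (hv : v ≠ 0)
    (hper : ∀ y, ‖f (y + v)‖ = ‖f y‖) (hx : ContinuousAt f x) (hfx : f x ≠ 0) :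
    ¬ Integrable f μ := by
  intro hf
  set δ := ‖f x‖ / 2
  have hδ : 0 < δ := by positivity
  obtain ⟨r, hr, hball⟩ : ∃ r > 0, ball x r ⊆ {y | δ < ‖f y‖} :=
    Metric.mem_nhds_iff.mp
      (hx.norm.preimage_mem_nhds (lt_mem_nhds (half_lt_self (norm_pos_iff.mpr hfx))))
  have hper_n (y : E) (n : ℕ) : ‖f (y + n • v)‖ = ‖f y‖ := by
    induction n with
    | zero => simp
    | succ n ih => rw [succ_nsmul, ← add_assoc, hper, ih]
  have hε : 0 < min r (‖v‖ / 2) := lt_min hr (by positivity)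
  have hsub (n : ℕ) : ball (x + n • v) (min r (‖v‖ / 2)) ⊆ {y | δ ≤ ‖f y‖} := by
    intro y hy
    have : y - n • v ∈ ball x r := by
      rw [mem_ball, dist_eq_norm, sub_sub, add_comm, ← dist_eq_norm]
      exact (mem_ball.mp hy).trans_le (min_le_left _ _)
    rw [Set.mem_ofPred_eq, ← sub_add_cancel y (n • v), hper_n]
    exact (hball this).le
  exact (hf.measure_norm_ge_lt_top hδ).ne
    (addHaar_eq_top_of_ball_add_nsmul_subset μ hε (by linarith [min_le_right r (‖v‖ / 2)]) hsub)

end PeriodicNorm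

lemma charFun_add_of_ae_inner_eq {E : Type*} [NormedAddCommGroup E] [InnerProductSpace ℝ E]
    [MeasurableSpace E] {μ : Measure E} {a : E} {c : ℝ} (h : ∀ᵐ x ∂μ, ⟪x, a⟫ = c) (t : E) :
    charFun μ (t + a) = exp (c * I) * charFun μ t := by
  rw [charFun_apply, charFun_apply, ← integral_const_mul]
  refine integral_congr_ae (h.mono fun x hx => ?_)
  dsimp only
  rw [inner_add_right, hx, ← Complex.exp_add]
  push_cast
  ring_nf

lemma MeasureTheory.MemLp.ae_eq_integral_of_variance_eq_zero {Ω : Type*} [MeasurableSpace Ω]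
    {μ : Measure Ω} [IsFiniteMeasure μ]
    {X : Ω → ℝ} (hX : MemLp X 2 μ) (h : variance X μ = 0) : X =ᵐ[μ] fun _ => μ[X] :=
  (evariance_eq_zero_iff hX.1.aemeasurable).mp
    (by rw [← hX.ofReal_variance_eq, h, ENNReal.ofReal_zero])

/-- if `Z` is a random vector in `ℝ^k` with `E‖Z‖² < ∞` whose characteristic
function `t ↦ E[exp(i t · Z)]` is Lebesgue-integrable on `ℝ^k`, then the covariance matrix of
`Z` is positive definite: for every nonzero `a ∈ ℝ^k`, `Var(a · Z) > 0`. -/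
theorem stmt6 {k : ℕ} {Ω : Type*} [MeasurableSpace Ω] (P : Measure Ω) [IsProbabilityMeasure P]
    (Z : Ω → EuclideanSpace ℝ (Fin k)) (hZmeas : Measurable Z) (hZ2 : MemLp Z 2 P)
    (hcf : Integrable
      (fun t : EuclideanSpace ℝ (Fin k) =>
        ∫ ω, Complex.exp (Complex.I * ((⟪t, Z ω⟫ : ℝ) : ℂ)) ∂P)
      (volume : Measure (EuclideanSpace ℝ (Fin k)))) :
    ∀ a : EuclideanSpace ℝ (Fin k), a ≠ 0 → 0 < variance (fun ω => ⟪a, Z ω⟫) P := by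
  intro a ha
  by_contra! hvar
  have : IsProbabilityMeasure (P.map Z) := Measure.isProbabilityMeasure_map hZmeas.aemeasurable
  have hφ : (fun t => ∫ ω, exp (I * ((⟪t, Z ω⟫ : ℝ) : ℂ)) ∂P) = charFun (P.map Z) := by
    ext t
    rw [charFun_apply, integral_map hZmeas.aemeasurable (by fun_prop)]
    simp only [real_inner_comm t, mul_comm I]
  have hconst : ∀ᵐ x ∂P.map Z, ⟪x, a⟫ = P[fun ω => ⟪a, Z ω⟫] := by
    rw [ae_map_iff hZmeas.aemeasurable (measurableSet_eq_fun (by fun_prop) (by fun_prop))]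
    filter_upwards [(hZ2.const_inner a).ae_eq_integral_of_variance_eq_zero
      (le_antisymm hvar (variance_nonneg _ _))] with ω hω
    rwa [real_inner_comm]
  refine not_integrable_of_norm_add_eq volume ha (fun t => ?_) continuous_charFun.continuousAt
    (x := 0) (by simp [charFun_zero]) (hφ ▸ hcf)
  rw [charFun_add_of_ae_inner_eq hconst, norm_mul, norm_exp_ofReal_mul_I, one_mul]

end
end

section
/- Let (X, Y) be a pair of random vectors with X taking values in ℝⁿ and Y in ℝ^m, with joint characteristic function ψ(u, v) = E[exp(i(u · X + v · Y))]. Suppose ψ is real-valued and nonnegative everywhere, and Y has a Lebesgue density bounded by M. Then for every u ∈ ℝⁿ, ∫_{ℝ^m} ψ(u, v) dv ≤ M(2π)^m. -/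
/-! Damp `ψ(u, ·)` by the Gaussian `e^{-ε|v|²}`. By Fubini and the Fourier transform of the
Gaussian, `∫ ψ(u,v) e^{-ε|v|²} dv = (π/ε)^{m/2} E[e^{i u·X} e^{-|Y|²/(4ε)}]`, whose modulus is at
most `(π/ε)^{m/2} ∫ f(y) e^{-|y|²/(4ε)} dy ≤ M (π/ε)^{m/2} (4πε)^{m/2} = M (2π)^m`.
As `ψ ≥ 0`, Fatou's lemma lets `ε → 0`. -/

open MeasureTheory Filter Topology Module Complex
open scoped RealInnerProductSpace Real ENNReal

theorem lintegral_comp_le_of_density_le {Ω E : Type*} [MeasurableSpace Ω] [MeasurableSpace E]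
    {P : Measure Ω} {μ : Measure E} {Y : Ω → E} (hY : Measurable Y) {f : E → ℝ} {M : ℝ}
    (hfM : ∀ᵐ y ∂μ, f y ≤ M) (hdens : P.map Y = μ.withDensity fun y => ENNReal.ofReal (f y))
    {g : E → ℝ≥0∞} (hg : Measurable g) :
    ∫⁻ ω, g (Y ω) ∂P ≤ ENNReal.ofReal M * ∫⁻ y, g y ∂μ := by
  rw [← lintegral_map hg hY, hdens, ← smul_eq_mul, ← lintegral_smul_measure, ← withDensity_const]
  exact lintegral_mono' (withDensity_mono (hfM.mono fun y hy => ENNReal.ofReal_le_ofReal hy)) le_rfl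

theorem lintegral_ofReal_re_le_enorm_integral {α : Type*} [MeasurableSpace α] {μ : Measure α}
    {F : α → ℂ} (hF : Integrable F μ) (hF_re : ∀ x, 0 ≤ (F x).re) :
    ∫⁻ x, ENNReal.ofReal (F x).re ∂μ ≤ ‖∫ x, F x ∂μ‖ₑ := by
  rw [← ofReal_integral_eq_lintegral_ofReal (f := fun x => (F x).re) hF.re (ae_of_all _ hF_re),
    ← ofReal_norm]
  exact ENNReal.ofReal_le_ofReal ((integral_re hF).symm ▸ re_le_norm _)

theorem lintegral_le_of_forall_lintegral_mul_gaussian_le {E : Type*} [SeminormedAddCommGroup E]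
    [MeasurableSpace E] [OpensMeasurableSpace E] {μ : Measure E} {h : E → ℝ≥0∞}
    (hh : AEMeasurable h μ) {C : ℝ≥0∞}
    (hC : ∀ ε > 0, ∫⁻ v, h v * ENNReal.ofReal (rexp (-ε * ‖v‖ ^ 2)) ∂μ ≤ C) :
    ∫⁻ v, h v ∂μ ≤ C := by
  set w : ℕ → E → ℝ≥0∞ := fun k v => ENNReal.ofReal (rexp (-(1 / (k + 1)) * ‖v‖ ^ 2))
  have hw : ∀ v, Tendsto (fun k => w k v) atTop (𝓝 1) := fun v => by
    simpa [w] using ENNReal.tendsto_ofReal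
      (tendsto_one_div_add_atTop_nhds_zero_nat.neg.mul_const (‖v‖ ^ 2)).rexp
  calc ∫⁻ v, h v ∂μ
      = ∫⁻ v, liminf (fun k => h v * w k v) atTop ∂μ := lintegral_congr fun v => by
        simpa using ((ENNReal.Tendsto.const_mul (hw v) (Or.inl one_ne_zero)).liminf_eq).symm
    _ ≤ liminf (fun k => ∫⁻ v, h v * w k v ∂μ) atTop :=
        lintegral_liminf_le' fun k => hh.mul (by fun_prop)
    _ ≤ C := liminf_le_of_frequently_le' (Frequently.of_forall fun k => hC _ (by positivity))

section InnerProductSpace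

variable {V : Type*} [NormedAddCommGroup V] [InnerProductSpace ℝ V] [FiniteDimensional ℝ V]
  [MeasurableSpace V] [BorelSpace V]

theorem integrable_rexp_neg_mul_sq_norm {b : ℝ} (hb : 0 < b) :
    Integrable fun v : V => rexp (-b * ‖v‖ ^ 2) := by
  have h := (GaussianFourier.integrable_cexp_neg_mul_sq_norm_add (V := V)
    (b := (b : ℂ)) (by simpa using hb) 0 0).re
  refine h.congr (ae_of_all _ fun v => ?_)
  simp only [zero_mul, add_zero, RCLike.re_to_complex]
  rw [← exp_ofReal_re]
  push_cast
  rfl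

theorem lintegral_ofReal_rexp_neg_mul_sq_norm {b : ℝ} (hb : 0 < b) :
    ∫⁻ v : V, ENNReal.ofReal (rexp (-b * ‖v‖ ^ 2))
      = ENNReal.ofReal ((π / b) ^ (finrank ℝ V / 2 : ℝ)) := by
  rw [← ofReal_integral_eq_lintegral_ofReal (integrable_rexp_neg_mul_sq_norm hb)
    (ae_of_all _ fun v => (Real.exp_pos _).le), GaussianFourier.integral_rexp_neg_mul_sq_norm hb]

theorem lintegral_gaussian_comp_le_of_density_le {Ω : Type*} [MeasurableSpace Ω]
    {P : Measure Ω} {Y : Ω → V} (hY : Measurable Y) {f : V → ℝ} {M : ℝ}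
    (hfM : ∀ᵐ y, f y ≤ M) (hdens : P.map Y = volume.withDensity fun y => ENNReal.ofReal (f y))
    {b : ℝ} (hb : 0 < b) :
    ∫⁻ ω, ENNReal.ofReal (rexp (-b * ‖Y ω‖ ^ 2)) ∂P
      ≤ ENNReal.ofReal M * ENNReal.ofReal ((π / b) ^ (finrank ℝ V / 2 : ℝ)) :=
  lintegral_ofReal_rexp_neg_mul_sq_norm (V := V) hb ▸
    lintegral_comp_le_of_density_le hY hfM hdens (by fun_prop)

theorem integral_cexp_phase_mul_gaussian {ε : ℝ} (hε : 0 < ε) (a : ℝ) (y : V) :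
    ∫ v : V, cexp (I * ↑(a + ⟪v, y⟫)) * ↑(rexp (-ε * ‖v‖ ^ 2))
      = cexp (I * a) * ↑((π / ε) ^ (finrank ℝ V / 2 : ℝ) * rexp (-(4 * ε)⁻¹ * ‖y‖ ^ 2)) := by
  have h_split : ∀ v : V, cexp (I * ↑(a + ⟪v, y⟫)) * ↑(rexp (-ε * ‖v‖ ^ 2))
      = cexp (I * a) * cexp (-ε * ‖v‖ ^ 2 + I * ⟪y, v⟫) := by
    intro v
    rw [ofReal_exp, ← Complex.exp_add, ← Complex.exp_add, real_inner_comm]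
    push_cast
    ring_nf
  simp_rw [h_split]
  rw [integral_const_mul, GaussianFourier.integral_cexp_neg_mul_sq_norm_add (by simpa using hε)]
  congr 1
  rw [ofReal_mul, ofReal_cpow (div_nonneg Real.pi_pos.le hε.le), ofReal_exp, I_sq]
  push_cast
  congr 2
  ring

section PhasedCharFun

variable {Ω : Type*} [MeasurableSpace Ω] (P : Measure Ω) (a : Ω → ℝ) (Y : Ω → V)

noncomputable def phasedCharFun (v : V) : ℂ :=
  ∫ ω, cexp (I * ↑(a ω + ⟪v, Y ω⟫)) ∂P

variable {P a Y}

theorem measurable_cexp_phase (ha : Measurable a) (hY : Measurable Y) :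
    Measurable fun p : V × Ω => cexp (I * ↑(a p.2 + ⟪p.1, Y p.2⟫)) := by
  fun_prop

theorem stronglyMeasurable_phasedCharFun [SFinite P] (ha : Measurable a) (hY : Measurable Y) :
    StronglyMeasurable (phasedCharFun P a Y) :=
  (measurable_cexp_phase ha hY).stronglyMeasurable.integral_prod_right'

theorem integrable_phase_mul_gaussian [IsFiniteMeasure P] (ha : Measurable a) (hY : Measurable Y)
    {ε : ℝ} (hε : 0 < ε) :
    Integrable (Function.uncurry fun (v : V) ω =>
      cexp (I * ↑(a ω + ⟪v, Y ω⟫)) * ↑(rexp (-ε * ‖v‖ ^ 2))) ((volume : Measure V).prod P) := by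
  refine ((integrable_rexp_neg_mul_sq_norm hε).comp_fst P).mono' ?_ (ae_of_all _ fun p => ?_)
  · exact ((measurable_cexp_phase ha hY).mul (by fun_prop)).aestronglyMeasurable
  · rw [Function.uncurry_def, norm_mul, norm_exp_I_mul_ofReal, one_mul, norm_real,
      Real.norm_of_nonneg (Real.exp_pos _).le]

theorem integral_phasedCharFun_mul_gaussian [IsFiniteMeasure P] (ha : Measurable a)
    (hY : Measurable Y) {ε : ℝ} (hε : 0 < ε) :
    ∫ v, phasedCharFun P a Y v * ↑(rexp (-ε * ‖v‖ ^ 2))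
      = ∫ ω, cexp (I * a ω)
          * ↑((π / ε) ^ (finrank ℝ V / 2 : ℝ) * rexp (-(4 * ε)⁻¹ * ‖Y ω‖ ^ 2)) ∂P := by
  simp_rw [phasedCharFun, ← integral_mul_const]
  rw [integral_integral_swap (integrable_phase_mul_gaussian ha hY hε)]
  simp_rw [integral_cexp_phase_mul_gaussian hε]

theorem integrable_phasedCharFun_mul_gaussian [IsFiniteMeasure P] (ha : Measurable a)
    (hY : Measurable Y) {ε : ℝ} (hε : 0 < ε) :
    Integrable fun v => phasedCharFun P a Y v * ↑(rexp (-ε * ‖v‖ ^ 2)) := by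
  simp_rw [phasedCharFun, ← integral_mul_const]
  exact (integrable_phase_mul_gaussian ha hY hε).integral_prod_left

theorem enorm_integral_phasedCharFun_mul_gaussian_le [IsFiniteMeasure P] (ha : Measurable a)
    (hY : Measurable Y) {ε : ℝ} (hε : 0 < ε) :
    ‖∫ v, phasedCharFun P a Y v * ↑(rexp (-ε * ‖v‖ ^ 2))‖ₑ
      ≤ ENNReal.ofReal ((π / ε) ^ (finrank ℝ V / 2 : ℝ))
          * ∫⁻ ω, ENNReal.ofReal (rexp (-(4 * ε)⁻¹ * ‖Y ω‖ ^ 2)) ∂P := by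
  have hC : 0 ≤ (π / ε) ^ (finrank ℝ V / 2 : ℝ) := by positivity
  rw [integral_phasedCharFun_mul_gaussian ha hY hε,
    ← lintegral_const_mul' _ _ ENNReal.ofReal_ne_top]
  refine (enorm_integral_le_lintegral_enorm _).trans_eq (lintegral_congr fun ω => ?_)
  rw [← ofReal_norm, norm_mul, norm_exp_I_mul_ofReal, one_mul, norm_real,
    Real.norm_of_nonneg (by positivity), ENNReal.ofReal_mul hC]

end PhasedCharFun

end InnerProductSpace

theorem pi_div_rpow_mul_pi_div_inv_rpow {ε : ℝ} (hε : 0 < ε) (d : ℕ) :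
    (π / ε) ^ (d / 2 : ℝ) * (π / (4 * ε)⁻¹) ^ (d / 2 : ℝ) = (2 * π) ^ d := by
  rw [← Real.mul_rpow (by positivity) (by positivity),
    show π / ε * (π / (4 * ε)⁻¹) = (2 * π) ^ (2 : ℝ) by field_simp; norm_num; ring,
    ← Real.rpow_mul (by positivity), mul_div_cancel₀ _ two_ne_zero, Real.rpow_natCast]

theorem stmt8_general {n m : ℕ} {Ω : Type*} [MeasurableSpace Ω] (P : Measure Ω)
    [IsProbabilityMeasure P]
    (X : Ω → EuclideanSpace ℝ (Fin n)) (Y : Ω → EuclideanSpace ℝ (Fin m))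
    (hX : Measurable X) (hY : Measurable Y)
    (f : EuclideanSpace ℝ (Fin m) → ℝ) (M : ℝ)
    (hfM : ∀ᵐ y ∂(volume : Measure (EuclideanSpace ℝ (Fin m))), f y ≤ M)
    (hdens : Measure.map Y P
      = (volume : Measure (EuclideanSpace ℝ (Fin m))).withDensity
          fun y => ENNReal.ofReal (f y))
    (ψ : EuclideanSpace ℝ (Fin n) → EuclideanSpace ℝ (Fin m) → ℂ)
    (hψ : ψ = fun u v => ∫ ω, Complex.exp (Complex.I * ((⟪u, X ω⟫ + ⟪v, Y ω⟫ : ℝ) : ℂ)) ∂P)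
    (hnonneg : ∀ u v, 0 ≤ (ψ u v).re) :
    ∀ u : EuclideanSpace ℝ (Fin n),
      ∫⁻ v, ENNReal.ofReal ((ψ u v).re) ∂(volume : Measure (EuclideanSpace ℝ (Fin m)))
        ≤ ENNReal.ofReal (M * (2 * Real.pi) ^ m) := by
  intro u
  have ha : Measurable fun ω => ⟪u, X ω⟫ := by fun_prop
  have hψu : ψ u = phasedCharFun P (fun ω => ⟪u, X ω⟫) Y := by rw [hψ]; rfl
  refine lintegral_le_of_forall_lintegral_mul_gaussian_le
    (hψu ▸ stronglyMeasurable_phasedCharFun ha hY).measurable.re.ennreal_ofReal.aemeasurable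
    fun ε hε => ?_
  calc ∫⁻ v, ENNReal.ofReal (ψ u v).re * ENNReal.ofReal (rexp (-ε * ‖v‖ ^ 2))
      = ∫⁻ v, ENNReal.ofReal (ψ u v * ↑(rexp (-ε * ‖v‖ ^ 2))).re := by
        simp_rw [re_mul_ofReal, ENNReal.ofReal_mul (hnonneg u _)]
    _ ≤ ‖∫ v, ψ u v * ↑(rexp (-ε * ‖v‖ ^ 2))‖ₑ :=
        lintegral_ofReal_re_le_enorm_integral
          (hψu ▸ integrable_phasedCharFun_mul_gaussian ha hY hε) fun v => by
            rw [re_mul_ofReal]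
            exact mul_nonneg (hnonneg u v) (Real.exp_pos _).le
    _ ≤ ENNReal.ofReal ((π / ε) ^ (m / 2 : ℝ))
          * ∫⁻ ω, ENNReal.ofReal (rexp (-(4 * ε)⁻¹ * ‖Y ω‖ ^ 2)) ∂P := by
        simpa [hψu] using enorm_integral_phasedCharFun_mul_gaussian_le ha hY hε
    _ ≤ ENNReal.ofReal ((π / ε) ^ (m / 2 : ℝ))
          * (ENNReal.ofReal M * ENNReal.ofReal ((π / (4 * ε)⁻¹) ^ (m / 2 : ℝ))) := by
        gcongr
        simpa using lintegral_gaussian_comp_le_of_density_le hY hfM hdens (b := (4 * ε)⁻¹)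
          (by positivity)
    _ = ENNReal.ofReal (M * (2 * π) ^ m) := by
        rw [← ENNReal.ofReal_mul' (by positivity), ← ENNReal.ofReal_mul (by positivity),
          mul_left_comm, pi_div_rpow_mul_pi_div_inv_rpow hε]

/-- let `(X, Y)` be a pair of random vectors in `ℝⁿ × ℝ^m` with joint
characteristic function `ψ(u,v) = E[exp(i(u·X + v·Y))]`. If `ψ` is real-valued and
nonnegative everywhere and `Y` has a Lebesgue density bounded by `M`, then for every `u`,
`∫_{ℝ^m} ψ(u,v) dv ≤ M (2π)^m`. -/
theorem stmt8 {n m : ℕ} {Ω : Type*} [MeasurableSpace Ω] (P : Measure Ω)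
    [IsProbabilityMeasure P]
    (X : Ω → EuclideanSpace ℝ (Fin n)) (Y : Ω → EuclideanSpace ℝ (Fin m))
    (hX : Measurable X) (hY : Measurable Y)
    (f : EuclideanSpace ℝ (Fin m) → ℝ) (hf : Measurable f) (M : ℝ)
    (hfM : ∀ᵐ y ∂(volume : Measure (EuclideanSpace ℝ (Fin m))), f y ≤ M)
    (hdens : Measure.map Y P
      = (volume : Measure (EuclideanSpace ℝ (Fin m))).withDensity
          fun y => ENNReal.ofReal (f y))
    (ψ : EuclideanSpace ℝ (Fin n) → EuclideanSpace ℝ (Fin m) → ℂ)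
    (hψ : ψ = fun u v => ∫ ω, Complex.exp (Complex.I * ((⟪u, X ω⟫ + ⟪v, Y ω⟫ : ℝ) : ℂ)) ∂P)
    (hreal : ∀ u v, (ψ u v).im = 0) (hnonneg : ∀ u v, 0 ≤ (ψ u v).re) :
    ∀ u : EuclideanSpace ℝ (Fin n),
      ∫⁻ v, ENNReal.ofReal ((ψ u v).re) ∂(volume : Measure (EuclideanSpace ℝ (Fin m)))
        ≤ ENNReal.ofReal (M * (2 * Real.pi) ^ m) :=
  stmt8_general P X Y hX hY f M hfM hdens ψ hψ hnonneg
end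

section
/- Let X be a Gamma-distributed random variable with shape a > 0 and rate 1, that is, with density x^{a−1} e^{−x}/Γ(a) on (0, ∞). Then for all real s and t, the joint characteristic function of (log X, −X) satisfies |E[exp(i(s · log X − t · X))]| = (|Γ(a + is)|/Γ(a)) · (1 + t²)^{−a/2} · exp(s · arctan t). -/
/-!
Pushing the expectation forward to the Gamma law and folding the density into the integrand gives
`Γ(a)⁻¹ ∫₀^∞ x^{z-1} e^{-cx} dx` with `z = a + is` and `c = 1 + it`. This Laplace-type integral
equals `Γ(z) / c^z` for every `c` in the right half-plane: both sides are holomorphic in `c` and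
agree for real `c > 0` by the substitution `x ↦ x / c`. Finally
`|c^z| = |c|^a e^{-s arg c}` with `|c| = √(1 + t²)` and `arg c = arctan t`.
-/

open MeasureTheory ProbabilityTheory Set Filter Topology Complex

lemma norm_ofReal_cpow_mul_cexp_neg_mul {x : ℝ} (hx : 0 < x) (w c : ℂ) :
    ‖(x : ℂ) ^ w * cexp (-(c * x))‖ = x ^ w.re * Real.exp (-(c.re * x)) := by
  rw [norm_mul, norm_cpow_eq_rpow_re_of_pos hx, norm_exp]
  simp

lemma integrableOn_ofReal_cpow_mul_cexp_neg_mul {w c : ℂ} (hw : -1 < w.re) (hc : 0 < c.re) :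
    IntegrableOn (fun x : ℝ ↦ (x : ℂ) ^ w * cexp (-(c * x))) (Ioi 0) := by
  have h := integrableOn_rpow_mul_exp_neg_mul_rpow hw zero_lt_one hc
  simp only [Real.rpow_one, neg_mul] at h
  refine h.mono' (by fun_prop : Measurable _).aestronglyMeasurable ?_
  filter_upwards [ae_restrict_mem (measurableSet_Ioi (a := (0 : ℝ)))] with x hx
  exact (norm_ofReal_cpow_mul_cexp_neg_mul hx w c).le

lemma hasDerivAt_integral_ofReal_cpow_mul_cexp_neg_mul {z c : ℂ} (hz : 0 < z.re) (hc : 0 < c.re) :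
    HasDerivAt (fun c : ℂ ↦ ∫ x in Ioi (0 : ℝ), (x : ℂ) ^ (z - 1) * cexp (-(c * x)))
      (∫ x in Ioi (0 : ℝ), -((x : ℂ) ^ z * cexp (-(c * x)))) c := by
  have hε : 0 < c.re / 2 := by positivity
  have h_bound : ∀ᵐ (x : ℝ) ∂volume.restrict (Ioi (0 : ℝ)), ∀ c' ∈ Metric.ball c (c.re / 2),
      ‖-((x : ℂ) ^ z * cexp (-(c' * x)))‖ ≤ ‖(x : ℂ) ^ z * cexp (-(((c.re / 2 : ℝ) : ℂ) * x))‖ := by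
    filter_upwards [ae_restrict_mem (measurableSet_Ioi (a := (0 : ℝ)))] with x (hx : 0 < x) c' hc'
    have hre : c.re / 2 ≤ c'.re := by
      have := (abs_re_le_norm (c' - c)).trans_lt (mem_ball_iff_norm.mp hc')
      rw [sub_re, abs_lt] at this
      linarith
    rw [norm_neg, norm_ofReal_cpow_mul_cexp_neg_mul hx, norm_ofReal_cpow_mul_cexp_neg_mul hx,
      ofReal_re]
    gcongr
  have h_diff : ∀ᵐ (x : ℝ) ∂volume.restrict (Ioi (0 : ℝ)), ∀ c' ∈ Metric.ball c (c.re / 2),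
      HasDerivAt (fun c : ℂ ↦ (x : ℂ) ^ (z - 1) * cexp (-(c * x)))
        (-((x : ℂ) ^ z * cexp (-(c' * x)))) c' := by
    filter_upwards [ae_restrict_mem (measurableSet_Ioi (a := (0 : ℝ)))] with x hx c' _
    have hx0 : (x : ℂ) ≠ 0 := ofReal_ne_zero.mpr hx.ne'
    refine ((((hasDerivAt_id c').mul_const (x : ℂ)).neg.cexp).const_mul
      ((x : ℂ) ^ (z - 1))).congr_deriv ?_
    simp only [Pi.neg_apply, id_eq, one_mul, cpow_sub _ _ hx0, cpow_one]
    field_simp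
  exact (hasDerivAt_integral_of_dominated_loc_of_deriv_le (μ := volume.restrict (Ioi 0))
    (F := fun c (x : ℝ) ↦ (x : ℂ) ^ (z - 1) * cexp (-(c * x)))
    (F' := fun c (x : ℝ) ↦ -((x : ℂ) ^ z * cexp (-(c * x)))) (Metric.ball_mem_nhds c hε)
    (.of_forall fun _ ↦ (by fun_prop : Measurable _).aestronglyMeasurable)
    (integrableOn_ofReal_cpow_mul_cexp_neg_mul (by simpa using hz) hc)
    (by fun_prop : Measurable _).aestronglyMeasurable h_bound
    (integrableOn_ofReal_cpow_mul_cexp_neg_mul (c := ((c.re / 2 : ℝ) : ℂ)) (by linarith)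
      (by simpa using hε)).norm h_diff).2

theorem integral_ofReal_cpow_mul_cexp_neg_mul_Ioi {z c : ℂ} (hz : 0 < z.re) (hc : 0 < c.re) :
    ∫ x in Ioi (0 : ℝ), (x : ℂ) ^ (z - 1) * cexp (-(c * x)) = Gamma z / c ^ z := by
  have hU_open : IsOpen {c : ℂ | 0 < c.re} := isOpen_lt continuous_const continuous_re
  have h_lhs : AnalyticOnNhd ℂ
      (fun c : ℂ ↦ ∫ x in Ioi (0 : ℝ), (x : ℂ) ^ (z - 1) * cexp (-(c * x))) {c | 0 < c.re} :=
    DifferentiableOn.analyticOnNhd (fun c hc ↦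
      (hasDerivAt_integral_ofReal_cpow_mul_cexp_neg_mul hz hc).differentiableAt
        |>.differentiableWithinAt) hU_open
  have h_rhs : AnalyticOnNhd ℂ (fun c : ℂ ↦ Gamma z / c ^ z) {c | 0 < c.re} := by
    refine DifferentiableOn.analyticOnNhd (fun c (hc : 0 < c.re) ↦ ?_) hU_open
    have hc' : c ∈ slitPlane := mem_slitPlane_iff.mpr (.inl hc)
    exact ((differentiableAt_const _).div (differentiableAt_id.cpow_const hc')
      (cpow_ne_zero_iff.mpr (.inl (slitPlane_ne_zero hc')))).differentiableWithinAt
  -- The two sides agree for real `c > 0`, which accumulate at `c = 1`.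
  have h_real : ∀ r : ℝ, 0 < r →
      ∫ x in Ioi (0 : ℝ), (x : ℂ) ^ (z - 1) * cexp (-(r * x)) = Gamma z / (r : ℂ) ^ z := by
    intro r hr
    rw [integral_cpow_mul_exp_neg_mul_Ioi hz hr, one_div, inv_cpow _ _ (by
      rw [arg_ofReal_of_nonneg hr.le]; exact Real.pi_ne_zero.symm), div_eq_inv_mul]
  have h_tendsto : Tendsto (fun r : ℝ ↦ (r : ℂ)) (𝓝[>] 1) (𝓝[≠] 1) :=
    tendsto_nhdsWithin_iff.mpr ⟨(continuous_ofReal.tendsto' 1 1 ofReal_one).mono_left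
      nhdsWithin_le_nhds, eventually_nhdsWithin_of_forall fun r (hr : 1 < r) ↦ by
        simpa using hr.ne'⟩
  refine h_lhs.eqOn_of_preconnected_of_frequently_eq h_rhs
    (convex_halfSpace_re_gt 0).isPreconnected (z₀ := 1) (by simp) ?_ hc
  exact h_tendsto.frequently (eventually_nhdsWithin_of_forall fun r (hr : r ∈ Ioi 1) ↦
    h_real r (zero_lt_one.trans hr)).frequently

lemma integral_gammaMeasure {E : Type*} [NormedAddCommGroup E] [NormedSpace ℝ E] {a r : ℝ}
    (ha : 0 < a) (hr : 0 < r) (f : ℝ → E) :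
    ∫ x, f x ∂gammaMeasure a r = ∫ x in Ioi 0, gammaPDFReal a r x • f x := by
  rw [gammaMeasure, ← integral_Ici_eq_integral_Ioi,
    setIntegral_eq_integral_of_forall_compl_eq_zero (s := Ici 0) fun x (hx : ¬0 ≤ x) ↦ by
      rw [gammaPDFReal, if_neg hx, zero_smul]]
  exact integral_withDensity_eq_integral_toReal_smul (measurable_gammaPDFReal a r).ennreal_ofReal
    (.of_forall fun _ ↦ ENNReal.ofReal_lt_top) f |>.trans (by
      simp [ENNReal.toReal_ofReal (gammaPDFReal_nonneg ha hr _)])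

lemma gammaPDFReal_mul_cexp {a r x : ℝ} (hx : 0 < x) (s t : ℝ) :
    (gammaPDFReal a r x : ℂ) * cexp (I * ((s * Real.log x - t * x : ℝ) : ℂ))
      = ((r ^ a / Real.Gamma a : ℝ) : ℂ)
        * ((x : ℂ) ^ ((a + s * I) - 1) * cexp (-((r + t * I) * x))) := by
  rw [gammaPDFReal, if_pos hx.le, Real.rpow_def_of_pos hx,
    cpow_def_of_ne_zero (ofReal_ne_zero.mpr hx.ne'), ← ofReal_log hx.le]
  push_cast
  rw [mul_assoc, mul_assoc, ← Complex.exp_add, ← Complex.exp_add, ← Complex.exp_add]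
  congr 2
  ring

theorem integral_cexp_I_mul_log_sub_mul_gammaMeasure {a r : ℝ} (ha : 0 < a) (hr : 0 < r)
    (s t : ℝ) :
    ∫ x, cexp (I * ((s * Real.log x - t * x : ℝ) : ℂ)) ∂gammaMeasure a r
      = ((r ^ a / Real.Gamma a : ℝ) : ℂ) * (Gamma (a + s * I) / (r + t * I) ^ (a + s * I)) := by
  rw [integral_gammaMeasure ha hr, ← integral_ofReal_cpow_mul_cexp_neg_mul_Ioi (by simpa using ha)
    (by simpa using hr), ← integral_const_mul]
  exact setIntegral_congr_fun measurableSet_Ioi fun x hx ↦ by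
    rw [real_smul, gammaPDFReal_mul_cexp hx]

lemma arg_eq_arctan {z : ℂ} (hz : 0 < z.re) : arg z = Real.arctan (z.im / z.re) := by
  obtain ⟨h₁, h₂⟩ := abs_lt.mp (abs_arg_lt_pi_div_two_iff.mpr (.inl hz))
  rw [← tan_arg, Real.arctan_tan h₁ h₂]

lemma norm_one_add_mul_I_cpow (t : ℝ) (w : ℂ) :
    ‖(1 + t * I) ^ w‖ = (1 + t ^ 2) ^ (w.re / 2) / Real.exp (Real.arctan t * w.im) := by
  have h := norm_add_mul_I 1 t
  rw [ofReal_one] at h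
  rw [norm_cpow_of_ne_zero (fun h0 ↦ by simpa using congrArg re h0), arg_eq_arctan (by simp), h,
    one_pow, Real.sqrt_eq_rpow, ← Real.rpow_mul (by positivity)]
  simp [div_eq_inv_mul]

theorem stmt15_general {Ω : Type*} [MeasurableSpace Ω] (P : Measure Ω)
    (a : ℝ) (ha : 0 < a) (X : Ω → ℝ) (hX : Measurable X)
    (hlaw : Measure.map X P = gammaMeasure a 1) (s t : ℝ) :
    ‖∫ ω, Complex.exp (Complex.I * ((s * Real.log (X ω) - t * X ω : ℝ) : ℂ)) ∂P‖
      = ‖Complex.Gamma ((a : ℂ) + (s : ℂ) * Complex.I)‖ / Real.Gamma a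
        * (1 + t ^ 2) ^ (-(a / 2)) * Real.exp (s * Real.arctan t) := by
  have h_law : ∫ ω, cexp (I * ((s * Real.log (X ω) - t * X ω : ℝ) : ℂ)) ∂P
      = ∫ x, cexp (I * ((s * Real.log x - t * x : ℝ) : ℂ)) ∂gammaMeasure a 1 := by
    rw [← hlaw, integral_map hX.aemeasurable (by fun_prop)]
  rw [h_law, integral_cexp_I_mul_log_sub_mul_gammaMeasure ha one_pos, ofReal_one,
    norm_mul, norm_div, norm_one_add_mul_I_cpow, Real.one_rpow, norm_real,
    Real.norm_of_nonneg (by positivity)]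
  simp only [add_re, add_im, ofReal_re, ofReal_im, mul_re, mul_im, I_re, I_im]
  rw [Real.rpow_neg (by positivity)]
  field_simp
  ring_nf

/-- if `X` is Gamma-distributed with shape `a > 0` and rate `1`, then for all
real `s` and `t`, the joint characteristic function of `(log X, −X)` satisfies
`|E[exp(i(s·log X − t·X))]| = (|Γ(a+is)|/Γ(a)) (1+t²)^{−a/2} exp(s arctan t)`. -/
theorem stmt15 {Ω : Type*} [MeasurableSpace Ω] (P : Measure Ω) [IsProbabilityMeasure P]
    (a : ℝ) (ha : 0 < a) (X : Ω → ℝ) (hX : Measurable X)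
    (hlaw : Measure.map X P = gammaMeasure a 1) (s t : ℝ) :
    ‖∫ ω, Complex.exp (Complex.I * ((s * Real.log (X ω) - t * X ω : ℝ) : ℂ)) ∂P‖
      = ‖Complex.Gamma ((a : ℂ) + (s : ℂ) * Complex.I)‖ / Real.Gamma a
        * (1 + t ^ 2) ^ (-(a / 2)) * Real.exp (s * Real.arctan t) :=
  stmt15_general P a ha X hX hlaw s t
end
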